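/- arXiv:1404.3279 — 6 statements merged into one kernel-verified Lean document; each statement's English description precedes it below -/
import Mathlib

section
/- The Lie algebra W(Γ) contains no nonzero ad-locally finite element; that is, if x ∈ W(Γ) is such that for every y ∈ W(Γ) the span of {ad_x^k(y) : k ∈ ℤ≥0} is finite-dimensional, then x = 0. -/
/-!
Order the basis indices `(γ, n)` of `W(Γ)` by an injective additive key into a totally ordered
cancellative monoid, e.g. lexicographically by `(Re γ, Im γ, n)`. A nonzero `x` then has a leading
term `c • L_{α,m}`. Since `[L_{α,i}, L_{β,j}]` has leading term `(j - i) • L_{α+β,i+j+1}`, bracketing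
with `x` turns an element with leading term `L_{β,n}`, `n ≠ m`, into one with leading term
`L_{α+β,m+n+1}`. Hence the elements `ad_x^l L_{0,m+1}` have leading terms `L_{lα,(l+1)(m+1)}` at
pairwise distinct indices, so they are linearly independent.
-/

open Submodule

section LeadingTerms

variable {ι R V M : Type*} [Ring R] [AddCommGroup V] [Module R V] [LinearOrder M]

def spanBelow (B : Module.Basis ι R V) (κ : ι → M) (t : M) : Submodule R V :=
  span R (B '' {q | κ q < t})

variable {B : Module.Basis ι R V} {κ : ι → M}

lemma repr_eq_zero_of_mem_spanBelow {t : M} {v : V} (hv : v ∈ spanBelow B κ t) {q : ι}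
    (hq : t ≤ κ q) : B.repr v q = 0 :=
  Finsupp.notMem_support_iff.mp fun h => (hq.not_gt ((B.mem_span_image.mp hv) h))

lemma repr_eq_of_sub_smul_mem_spanBelow {v : V} {c : R} {p : ι}
    (hv : v - c • B p ∈ spanBelow B κ (κ p)) : B.repr v p = c := by
  simpa [sub_eq_zero] using repr_eq_zero_of_mem_spanBelow hv le_rfl

lemma exists_sub_smul_mem_spanBelow (hκ : Function.Injective κ) {v : V} (hv : v ≠ 0) :
    ∃ (p : ι) (c : R), c ≠ 0 ∧ v - c • B p ∈ spanBelow B κ (κ p) := by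
  have hsupp : (B.repr v).support.Nonempty := by simpa using hv
  obtain ⟨p, hp, hmax⟩ := (B.repr v).support.exists_max_image κ hsupp
  refine ⟨p, B.repr v p, Finsupp.mem_support_iff.mp hp, B.mem_span_image.mpr fun q hq => ?_⟩
  have hqp : q ≠ p := by
    rintro rfl
    simp at hq
  have hq' : q ∈ (B.repr v).support := by
    simpa [Finsupp.single_apply, hqp.symm] using hq
  exact (hmax q hq').lt_of_ne (hκ.ne hqp)

lemma linearIndependent_of_sub_smul_mem_spanBelow [NoZeroDivisors R] {η : Type*} {v : η → V}
    {p : η → ι} {c : η → R} (hp : Function.Injective (κ ∘ p)) (hc : ∀ l, c l ≠ 0)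
    (hv : ∀ l, v l - c l • B (p l) ∈ spanBelow B κ (κ (p l))) : LinearIndependent R v := by
  classical
  rw [linearIndependent_iff']
  intro s g hsum i hi
  by_contra hgi
  obtain ⟨k, hk, hmax⟩ := (s.filter (g · ≠ 0)).exists_max_image (κ ∘ p)
    ⟨i, Finset.mem_filter.mpr ⟨hi, hgi⟩⟩
  rw [Finset.mem_filter] at hk
  have hcoeff : ∑ j ∈ s, g j * B.repr (v j) (p k) = 0 := by
    simpa using congrArg (fun w => B.repr w (p k)) hsum
  rw [Finset.sum_eq_single k ?_ (absurd hk.1), repr_eq_of_sub_smul_mem_spanBelow (hv k)]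
    at hcoeff
  · exact mul_ne_zero hk.2 (hc k) hcoeff
  intro j hj hjk
  by_cases hgj : g j = 0
  · rw [hgj, zero_mul]
  have hlt : κ (p j) < κ (p k) :=
    (hmax j (Finset.mem_filter.mpr ⟨hj, hgj⟩)).lt_of_ne (hp.ne hjk)
  have hpjk : p j ≠ p k := fun h => hjk (hp (congrArg κ h))
  have hvj : B.repr (v j) (p k) = 0 := by
    simpa [Finsupp.single_apply, hpjk] using repr_eq_zero_of_mem_spanBelow (hv j) hlt.le
  rw [hvj, mul_zero]

end LeadingTerms

section WittType

variable {Γ : AddSubgroup ℂ} {W : Type*} [LieRing W] [LieAlgebra ℂ W]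

def IsWBasis (B : Module.Basis (Γ × ℕ) ℂ W) : Prop :=
  ∀ (α β : Γ) (i j : ℕ), ⁅B (α, i), B (β, j)⁆ = ((β : ℂ) - (α : ℂ)) • B (α + β, i + j)
    + ((j : ℂ) - (i : ℂ)) • B (α + β, i + j + 1)

variable {B : Module.Basis (Γ × ℕ) ℂ W} (hB : IsWBasis B)
  {M : Type*} [AddCommMonoid M] [LinearOrder M] [IsOrderedCancelAddMonoid M]
  {κ : Γ × ℕ →+ M} (hκ : 0 < κ (0, 1))
include hB hκ

lemma lie_mem_spanBelow {S T : Set (Γ × ℕ)} {t : M}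
    (hST : ∀ p ∈ S, ∀ q ∈ T, κ p + κ q + κ (0, 1) < t) {x w : W}
    (hx : x ∈ span ℂ (B '' S)) (hw : w ∈ span ℂ (B '' T)) : ⁅x, w⁆ ∈ spanBelow B κ t := by
  have hmem := apply_mem_map₂
    (LinearMap.mk₂ ℂ (fun a b : W => ⁅a, b⁆) add_lie smul_lie lie_add lie_smul) hx hw
  rw [map₂_span_span] at hmem
  refine span_le.mpr ?_ hmem
  rintro _ ⟨_, ⟨⟨α, i⟩, hp, rfl⟩, _, ⟨⟨β, j⟩, hq, rfl⟩, rfl⟩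
  have hlt := hST _ hp _ hq
  have hkey : κ (α + β, i + j + 1) = κ (α, i) + κ (β, j) + κ (0, 1) := by
    rw [← map_add, ← map_add, Prod.mk_add_mk, Prod.mk_add_mk, add_zero]
  have hkey' : κ (α + β, i + j) < t := by
    rw [show ((α + β, i + j) : Γ × ℕ) = (α, i) + (β, j) from rfl, map_add]
    exact (lt_add_of_pos_right _ hκ).trans hlt
  simp only [LinearMap.mk₂_apply, hB α β i j]
  exact add_mem (smul_mem _ _ (subset_span ⟨_, hkey', rfl⟩))
    (smul_mem _ _ (subset_span ⟨_, show κ _ < t from hkey ▸ hlt, rfl⟩))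

lemma lie_sub_smul_mem_spanBelow {x w : W} {c d : ℂ} {P Q : Γ × ℕ}
    (hx : x - c • B P ∈ spanBelow B κ (κ P)) (hw : w - d • B Q ∈ spanBelow B κ (κ Q)) :
    ⁅x, w⁆ - (c * d * ((Q.2 : ℂ) - P.2)) • B (P + Q + (0, 1)) ∈
      spanBelow B κ (κ (P + Q + (0, 1))) := by
  obtain ⟨x', hx', rfl⟩ : ∃ x' ∈ spanBelow B κ (κ P), x = c • B P + x' := ⟨_, hx, by abel⟩
  obtain ⟨w', hw', rfl⟩ : ∃ w' ∈ spanBelow B κ (κ Q), w = d • B Q + w' := ⟨_, hw, by abel⟩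
  have hBP : B P ∈ span ℂ (B '' {P}) := subset_span ⟨P, rfl, rfl⟩
  have hBQ : B Q ∈ span ℂ (B '' {Q}) := subset_span ⟨Q, rfl, rfl⟩
  have hkey : κ (P + Q + (0, 1)) = κ P + κ Q + κ (0, 1) := by rw [map_add, map_add]
  have hdecomp : ⁅c • B P + x', d • B Q + w'⁆ - (c * d * ((Q.2 : ℂ) - P.2)) • B (P + Q + (0, 1)) =
      (c * d * ((Q.1 : ℂ) - P.1)) • B (P + Q) + c • ⁅B P, w'⁆ + d • ⁅x', B Q⁆ + ⁅x', w'⁆ := by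
    obtain ⟨α, i⟩ := P
    obtain ⟨β, j⟩ := Q
    simp only [add_lie, lie_add, smul_lie, lie_smul, hB α β i j, Prod.mk_add_mk, add_zero]
    module
  rw [hdecomp, hkey]
  refine add_mem (add_mem (add_mem ?_ ?_) ?_) ?_
  · refine smul_mem _ _ (subset_span ⟨_, ?_, rfl⟩)
    show κ (P + Q) < _
    rw [map_add]
    exact lt_add_of_pos_right _ hκ
  · refine smul_mem _ _ (lie_mem_spanBelow hB hκ ?_ hBP hw')
    rintro p rfl q (hq : κ q < κ Q)
    gcongr
  · refine smul_mem _ _ (lie_mem_spanBelow hB hκ ?_ hx' hBQ)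
    rintro p (hp : κ p < κ P) q rfl
    gcongr
  · refine lie_mem_spanBelow hB hκ ?_ hx' hw'
    rintro p (hp : κ p < κ P) q (hq : κ q < κ Q)
    gcongr

lemma ad_pow_sub_smul_mem_spanBelow {x : W} {c : ℂ} {α : Γ} {m n : ℕ} (hc : c ≠ 0)
    (hx : x - c • B (α, m) ∈ spanBelow B κ (κ (α, m))) (hmn : m < n) (l : ℕ) :
    ∃ d : ℂ, d ≠ 0 ∧ (LieAlgebra.ad ℂ W x ^ l) (B (0, n)) - d • B (l • α, n + l * (m + 1)) ∈
      spanBelow B κ (κ (l • α, n + l * (m + 1))) := by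
  induction l with
  | zero => exact ⟨1, one_ne_zero, by simp⟩
  | succ l ih =>
    obtain ⟨d, hd, hv⟩ := ih
    have hstep := lie_sub_smul_mem_spanBelow hB hκ hx hv
    have hidx : ((α, m) + (l • α, n + l * (m + 1)) + (0, 1) : Γ × ℕ) =
        ((l + 1) • α, n + (l + 1) * (m + 1)) := by
      ext
      · simp [succ_nsmul']
      · simp only [Prod.snd_add]
        ring
    rw [hidx] at hstep
    refine ⟨_, mul_ne_zero (mul_ne_zero hc hd) ?_, by rwa [pow_succ', Module.End.mul_apply]⟩
    exact sub_ne_zero.mpr (by exact_mod_cast (by omega : n + l * (m + 1) ≠ m))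

end WittType

def lexKey (Γ : AddSubgroup ℂ) : Γ × ℕ →+ (ℝ ×ₗ ℝ) ×ₗ ℕ where
  toFun p := toLex (toLex ((p.1 : ℂ).re, (p.1 : ℂ).im), p.2)
  map_zero' := rfl
  map_add' _ _ := rfl

lemma lexKey_apply (Γ : AddSubgroup ℂ) (p : Γ × ℕ) :
    lexKey Γ p = toLex (toLex ((p.1 : ℂ).re, (p.1 : ℂ).im), p.2) := rfl

lemma lexKey_injective (Γ : AddSubgroup ℂ) : Function.Injective (lexKey Γ) := by
  rintro ⟨α, i⟩ ⟨β, j⟩ h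
  simp only [lexKey_apply, toLex_inj, Prod.mk.injEq] at h
  obtain ⟨⟨hre, him⟩, rfl⟩ := h
  rw [Subtype.ext (Complex.ext hre him)]

lemma lexKey_pos (Γ : AddSubgroup ℂ) : 0 < lexKey Γ (0, 1) :=
  Prod.Lex.toLex_lt_toLex.mpr (Or.inr ⟨rfl, one_pos⟩)

theorem stmt1_general (Γ : AddSubgroup ℂ)
    (W : Type) [LieRing W] [LieAlgebra ℂ W] (B : Module.Basis (Γ × ℕ) ℂ W)
    (hB : ∀ (α β : Γ) (i j : ℕ),
      ⁅B (α, i), B (β, j)⁆ = ((β : ℂ) - (α : ℂ)) • B (α + β, i + j)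
        + ((j : ℂ) - (i : ℂ)) • B (α + β, i + j + 1)) :
    ∀ x : W,
      (∀ y : W, FiniteDimensional ℂ
        (Submodule.span ℂ (Set.range fun k : ℕ => ((LieAlgebra.ad ℂ W x) ^ k) y))) →
      x = 0 := by
  intro x hfin
  by_contra hx
  obtain ⟨⟨α, m⟩, c, hc, hlead⟩ := exists_sub_smul_mem_spanBelow (B := B) (lexKey_injective Γ) hx
  choose d hd hv using ad_pow_sub_smul_mem_spanBelow hB (lexKey_pos Γ) hc hlead m.lt_succ_self
  have hidx : Function.Injective fun l : ℕ => ((l • α, m + 1 + l * (m + 1)) : Γ × ℕ) :=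
    fun l l' h => Nat.eq_of_mul_eq_mul_right m.succ_pos (by simpa using congrArg Prod.snd h)
  have hli := linearIndependent_of_sub_smul_mem_spanBelow ((lexKey_injective Γ).comp hidx) hd hv
  have := hfin (B (0, m + 1))
  exact Module.Finite.not_linearIndependent_of_infinite _ (linearIndependent_span hli)

theorem stmt1 (Γ : AddSubgroup ℂ) (hΓ : Γ ≠ ⊥)
    (W : Type) [LieRing W] [LieAlgebra ℂ W] (B : Module.Basis (Γ × ℕ) ℂ W)
    (hB : ∀ (α β : Γ) (i j : ℕ),
      ⁅B (α, i), B (β, j)⁆ = ((β : ℂ) - (α : ℂ)) • B (α + β, i + j)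
        + ((j : ℂ) - (i : ℂ)) • B (α + β, i + j + 1)) :
    ∀ x : W,
      (∀ y : W, FiniteDimensional ℂ
        (Submodule.span ℂ (Set.range fun k : ℕ => ((LieAlgebra.ad ℂ W x) ^ k) y))) →
      x = 0 :=
  stmt1_general Γ W B hB
end

section
/- For all integers 0 ≤ m ≤ n, the ideal W^n equals the m-fold iterated bracket [W^1, [W^1, ..., [W^1, W^{n−m}]...]]; in particular, taking m = 1, the span of all brackets [x, y] with x ∈ W^1 and y ∈ W^{n−1} equals W^n. -/
/-- `Wn Γ W B n` is the subspace `W^n`, the span of `{L_{α,i} : α ∈ Γ, i ≥ n}`. -/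
noncomputable def Wn (Γ : AddSubgroup ℂ) (W : Type) [LieRing W] [LieAlgebra ℂ W]
    (B : Module.Basis (Γ × ℕ) ℂ W) (n : ℕ) : Submodule ℂ W :=
  Submodule.span ℂ {x : W | ∃ (α : Γ) (i : ℕ), n ≤ i ∧ x = B (α, i)}

/-- The bracket `[A, B]` of two subspaces of a Lie algebra: the span of all
brackets `⁅a, b⁆` with `a ∈ A`, `b ∈ B`. -/
noncomputable def subBracket (W : Type) [LieRing W] [LieAlgebra ℂ W]
    (A C : Submodule ℂ W) : Submodule ℂ W :=
  Submodule.span ℂ {z : W | ∃ a ∈ A, ∃ b ∈ C, z = ⁅a, b⁆}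

/-- The `m`-fold iterated bracket `[A, [A, ..., [A, S]...]]`. -/
noncomputable def iterBracket (W : Type) [LieRing W] [LieAlgebra ℂ W]
    (A : Submodule ℂ W) : ℕ → Submodule ℂ W → Submodule ℂ W
  | 0, S => S
  | m + 1, S => subBracket W A (iterBracket W A m S)

/-!
`W^n` is spanned by the `L_{γ,i}` with `i ≥ n`, and `[W^1, W^k] ⊆ W^{k+1}` is read off the
bracket formula. Conversely, for `δ ∈ Γ` nonzero,
`[L_{-δ,1}, L_{γ+δ,j}] - [L_{δ,1}, L_{γ-δ,j}] = 4δ L_{γ,j+1}` (the `L_{γ,j+2}` terms cancel), so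
`[W^1, W^k] = W^{k+1}`, and the claim follows by induction on `m`.
-/

section Brackets

variable {W : Type} [LieRing W] [LieAlgebra ℂ W]

theorem lie_mem_subBracket {A C : Submodule ℂ W} {a b : W} (ha : a ∈ A) (hb : b ∈ C) :
    ⁅a, b⁆ ∈ subBracket W A C :=
  Submodule.subset_span ⟨a, ha, b, hb, rfl⟩

theorem subBracket_span_span_le {s t : Set W} {P : Submodule ℂ W}
    (h : ∀ x ∈ s, ∀ y ∈ t, ⁅x, y⁆ ∈ P) :
    subBracket W (Submodule.span ℂ s) (Submodule.span ℂ t) ≤ P := by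
  rw [subBracket, Submodule.span_le]
  rintro z ⟨a, ha, b, hb, rfl⟩
  induction ha, hb using Submodule.span_induction₂ with
  | mem_mem x y hx hy => exact h x hx y hy
  | zero_left => simp
  | zero_right => simp
  | add_left x y z _ _ _ hxz hyz => rw [add_lie]; exact add_mem hxz hyz
  | add_right x y z _ _ _ hxy hxz => rw [lie_add]; exact add_mem hxy hxz
  | smul_left r x y _ _ hxy => rw [smul_lie]; exact P.smul_mem r hxy
  | smul_right r x y _ _ hxy => rw [lie_smul]; exact P.smul_mem r hxy

theorem iterBracket_eq_of_subBracket_eq_succ {A : Submodule ℂ W} {S : ℕ → Submodule ℂ W}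
    (h : ∀ k, subBracket W A (S k) = S (k + 1)) (m k : ℕ) :
    iterBracket W A m (S k) = S (k + m) := by
  induction m with
  | zero => rfl
  | succ m ih => rw [iterBracket, ih, h, Nat.add_assoc]

end Brackets

section Witt

variable {Γ : AddSubgroup ℂ} {W : Type} [LieRing W] [LieAlgebra ℂ W]
  {B : Module.Basis (Γ × ℕ) ℂ W}

theorem basis_mem_Wn {n i : ℕ} (α : Γ) (hi : n ≤ i) : B (α, i) ∈ Wn Γ W B n :=
  Submodule.subset_span ⟨α, i, hi, rfl⟩

variable (hB : ∀ (α β : Γ) (i j : ℕ),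
  ⁅B (α, i), B (β, j)⁆ = ((β : ℂ) - (α : ℂ)) • B (α + β, i + j)
    + ((j : ℂ) - (i : ℂ)) • B (α + β, i + j + 1))
include hB

theorem subBracket_Wn_one_le (k : ℕ) :
    subBracket W (Wn Γ W B 1) (Wn Γ W B k) ≤ Wn Γ W B (k + 1) := by
  refine subBracket_span_span_le ?_
  rintro _ ⟨α, i, hi, rfl⟩ _ ⟨β, j, hj, rfl⟩
  rw [hB]
  exact add_mem (Submodule.smul_mem _ _ (basis_mem_Wn _ (by omega)))
    (Submodule.smul_mem _ _ (basis_mem_Wn _ (by omega)))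

theorem lie_sub_lie_eq_smul_basis (δ γ : Γ) (j : ℕ) :
    ⁅B (-δ, 1), B (γ + δ, j)⁆ - ⁅B (δ, 1), B (γ - δ, j)⁆ = (4 * (δ : ℂ)) • B (γ, j + 1) := by
  rw [hB, hB, show -δ + (γ + δ) = γ by abel, show δ + (γ - δ) = γ by abel, Nat.add_comm 1 j]
  push_cast
  module

theorem Wn_succ_le_subBracket {δ : Γ} (hδ : δ ≠ 0) (k : ℕ) :
    Wn Γ W B (k + 1) ≤ subBracket W (Wn Γ W B 1) (Wn Γ W B k) := by
  rw [Wn, Submodule.span_le]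
  rintro _ ⟨γ, _ | j, hj, rfl⟩
  · omega
  have hmem (ε : Γ) (β : Γ) : ⁅B (ε, 1), B (β, j)⁆ ∈ subBracket W (Wn Γ W B 1) (Wn Γ W B k) :=
    lie_mem_subBracket (basis_mem_Wn ε le_rfl) (basis_mem_Wn β (by omega))
  have h4δ : (4 * (δ : ℂ)) ≠ 0 := by simpa using hδ
  rw [SetLike.mem_coe, ← Submodule.smul_mem_iff _ h4δ, ← lie_sub_lie_eq_smul_basis hB]
  exact sub_mem (hmem _ _) (hmem _ _)

end Witt

theorem stmt5 (Γ : AddSubgroup ℂ) (hΓ : Γ ≠ ⊥)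
    (W : Type) [LieRing W] [LieAlgebra ℂ W] (B : Module.Basis (Γ × ℕ) ℂ W)
    (hB : ∀ (α β : Γ) (i j : ℕ),
      ⁅B (α, i), B (β, j)⁆ = ((β : ℂ) - (α : ℂ)) • B (α + β, i + j)
        + ((j : ℂ) - (i : ℂ)) • B (α + β, i + j + 1)) :
    -- `W^n = [W^1, [W^1, ..., [W^1, W^{n-m}]...]]` (`m`-fold) for all `0 ≤ m ≤ n`
    (∀ m n : ℕ, m ≤ n →
      iterBracket W (Wn Γ W B 1) m (Wn Γ W B (n - m)) = Wn Γ W B n) ∧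
    -- in particular, `[W^1, W^{n-1}] = W^n` for `n ≥ 1`
    (∀ n : ℕ, 1 ≤ n → subBracket W (Wn Γ W B 1) (Wn Γ W B (n - 1)) = Wn Γ W B n) := by
  obtain ⟨δ, hδ⟩ := AddSubgroup.ne_bot_iff_exists_ne_zero.mp hΓ
  have hstep (k : ℕ) : subBracket W (Wn Γ W B 1) (Wn Γ W B k) = Wn Γ W B (k + 1) :=
    (subBracket_Wn_one_le hB k).antisymm (Wn_succ_le_subBracket hB hδ k)
  refine ⟨fun m n hmn => ?_, fun n hn => ?_⟩
  · rw [iterBracket_eq_of_subBracket_eq_succ hstep, Nat.sub_add_cancel hmn]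
  · rw [hstep, Nat.sub_add_cancel hn]
end

section
/- Every nonzero Lie ideal of W(Γ) contains a basis element; that is, if A is a nonzero ideal of W(Γ), then L_{β,j} ∈ A for some β ∈ Γ and j ∈ ℤ≥0. -/
/-!
Bracketing with a basis vector `B (a, m)` translates the `Γ`-support of `x` by `a`, writing
`(B.repr x).curry β` for the `β`-component of `x`. For `β ≠ a` the lowest coefficient of the
`β`-component is multiplied by `β - a ≠ 0`, so the `(a + β)`-component of the bracket is nonzero;
the `a`-component is sent to the `2a`-component with its `m`-th coefficient killed and the others
multiplied by `i - m ≠ 0`. So if `m` lies in the `a`-component, the bracket either keeps the size of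
the `Γ`-support and shrinks the component at `2a`, or, when the `a`-component is `{m}`, shrinks the
`Γ`-support. A lexicographic descent ends at a nonzero multiple of a basis vector.
-/

open Module

theorem Module.Basis.mem_of_support_repr_subset {ι R M S : Type*} [DivisionRing R]
    [AddCommGroup M] [Module R M] [SetLike S M] [SMulMemClass S R M] (B : Basis ι R M) {p : S}
    {x : M} (hx : x ∈ p) (hx0 : x ≠ 0) {i : ι} (h : (B.repr x).support ⊆ {i}) : B i ∈ p := by
  have hxi : x = B.repr x i • B i := by
    conv_lhs => rw [← B.linearCombination_repr x, Finsupp.eq_single_iff.2 ⟨h, rfl⟩]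
    rw [Finsupp.linearCombination_single]
  have hc : B.repr x i ≠ 0 := fun h0 => hx0 (by rw [hxi, h0, zero_smul])
  rw [← inv_smul_smul₀ hc (B i), ← hxi]
  exact SMulMemClass.smul_mem _ hx

variable {K : Type*} [Field K] {Γ : AddSubgroup K} {W : Type*} [LieRing W] [LieAlgebra K W]

def IsWittTypeBasis (B : Basis (Γ × ℕ) K W) : Prop :=
  ∀ (α β : Γ) (i j : ℕ), ⁅B (α, i), B (β, j)⁆ =
    ((β : K) - (α : K)) • B (α + β, i + j) + ((j : K) - (i : K)) • B (α + β, i + j + 1)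

namespace IsWittTypeBasis

variable {B : Basis (Γ × ℕ) K W}

theorem repr_lie_apply_of_lt (hB : IsWittTypeBasis B) (x : W) (a β : Γ) {m j : ℕ}
    (hj : j < m) : B.repr ⁅B (a, m), x⁆ (a + β, j) = 0 := by
  have key : B.coord (a + β, j) ∘ₗ LieAlgebra.ad K W (B (a, m)) = 0 := by
    classical
    refine B.ext fun ⟨γ, i⟩ => ?_
    simp [hB a γ m i, Finsupp.single_apply]
    split_ifs <;> grind
  simpa using LinearMap.congr_fun key x

theorem repr_lie_apply_self (hB : IsWittTypeBasis B) (x : W) (a β : Γ) (m : ℕ) :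
    B.repr ⁅B (a, m), x⁆ (a + β, m) = ((β : K) - a) * B.repr x (β, 0) := by
  have key : B.coord (a + β, m) ∘ₗ LieAlgebra.ad K W (B (a, m)) =
      ((β : K) - a) • B.coord (β, 0) := by
    classical
    refine B.ext fun ⟨γ, i⟩ => ?_
    simp [hB a γ m i, Finsupp.single_apply]
    split_ifs <;> grind
  simpa using LinearMap.congr_fun key x

theorem repr_lie_apply_add_succ (hB : IsWittTypeBasis B) (x : W) (a β : Γ) (m k : ℕ) :
    B.repr ⁅B (a, m), x⁆ (a + β, m + k + 1) =
      ((β : K) - a) * B.repr x (β, k + 1) + ((k : K) - m) * B.repr x (β, k) := by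
  have key : B.coord (a + β, m + k + 1) ∘ₗ LieAlgebra.ad K W (B (a, m)) =
      ((β : K) - a) • B.coord (β, k + 1) + ((k : K) - m) • B.coord (β, k) := by
    classical
    refine B.ext fun ⟨γ, i⟩ => ?_
    simp [hB a γ m i, Finsupp.single_apply]
    split_ifs <;> grind
  simpa using LinearMap.congr_fun key x

theorem curry_support_lie_subset (hB : IsWittTypeBasis B) (x : W) (a : Γ) (m : ℕ) :
    (B.repr ⁅B (a, m), x⁆).curry.support ⊆ (B.repr x).curry.support.map (addLeftEmbedding a) := by
  intro γ hγ
  obtain ⟨β, rfl⟩ : ∃ β, γ = a + β := ⟨γ - a, by abel⟩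
  refine Finset.mem_map_of_mem _ (Finsupp.mem_support_iff.2 fun hβ => ?_)
  have hc : ∀ k, B.repr x (β, k) = 0 := fun k => by simpa using DFunLike.congr_fun hβ k
  refine Finsupp.mem_support_iff.1 hγ (Finsupp.ext fun j => ?_)
  rw [Finsupp.curry_apply, Finsupp.zero_apply]
  rcases lt_trichotomy j m with hj | rfl | hj
  · exact hB.repr_lie_apply_of_lt x a β hj
  · rw [hB.repr_lie_apply_self, hc, mul_zero]
  · obtain ⟨k, rfl⟩ := Nat.exists_eq_add_of_lt hj
    rw [hB.repr_lie_apply_add_succ, hc, hc, mul_zero, mul_zero, add_zero]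

theorem add_mem_curry_support_lie (hB : IsWittTypeBasis B) {x : W} {a β : Γ} (m : ℕ)
    (hβ : β ∈ (B.repr x).curry.support) (hβa : β ≠ a) :
    a + β ∈ (B.repr ⁅B (a, m), x⁆).curry.support := by
  classical
  have hex : ∃ k, B.repr x (β, k) ≠ 0 := by
    simpa [Finsupp.ne_iff] using Finsupp.mem_support_iff.1 hβ
  have hβa' : (β : K) - a ≠ 0 := sub_ne_zero.2 (Subtype.coe_injective.ne hβa)
  rw [Finsupp.mem_support_iff, Finsupp.ne_iff]
  obtain h0 | ⟨k, hk⟩ : Nat.find hex = 0 ∨ ∃ k, Nat.find hex = k + 1 :=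
    (Nat.find hex).eq_zero_or_eq_succ_pred.imp id fun h => ⟨_, h⟩
  · refine ⟨m, ?_⟩
    rw [Finsupp.curry_apply, hB.repr_lie_apply_self]
    exact mul_ne_zero hβa' (h0 ▸ Nat.find_spec hex)
  · refine ⟨m + k + 1, ?_⟩
    have hk' : B.repr x (β, k) = 0 := not_not.1 (Nat.find_min hex (by omega))
    rw [Finsupp.curry_apply, hB.repr_lie_apply_add_succ, hk', mul_zero, add_zero]
    exact mul_ne_zero hβa' (hk ▸ Nat.find_spec hex)

theorem support_curry_lie_add_self [CharZero K] (hB : IsWittTypeBasis B) (x : W) (a : Γ)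
    (m : ℕ) :
    ((B.repr ⁅B (a, m), x⁆).curry (a + a)).support =
      (((B.repr x).curry a).support.erase m).map (addRightEmbedding (m + 1)) := by
  ext j
  simp only [Finsupp.mem_support_iff, Finsupp.curry_apply, Finset.mem_map, Finset.mem_erase,
    addRightEmbedding_apply]
  rcases lt_or_ge j (m + 1) with hj | hj
  · have hzero : B.repr ⁅B (a, m), x⁆ (a + a, j) = 0 := by
      rcases Nat.lt_succ_iff_lt_or_eq.1 hj with hj | rfl
      · exact hB.repr_lie_apply_of_lt x a a hj
      · rw [hB.repr_lie_apply_self, sub_self, zero_mul]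
    simp only [hzero, ne_eq, not_true_eq_false, false_iff, not_exists, not_and]
    omega
  · obtain ⟨k, rfl⟩ : ∃ k, j = m + k + 1 := ⟨j - (m + 1), by omega⟩
    rw [hB.repr_lie_apply_add_succ, sub_self, zero_mul, zero_add]
    have hk : ∀ i, i + (m + 1) = m + k + 1 ↔ i = k := fun i => by omega
    simp only [hk, exists_eq_right, mul_ne_zero_iff, sub_ne_zero, Nat.cast_inj, ne_eq]

theorem card_curry_support_lie_lt [CharZero K] (hB : IsWittTypeBasis B) {x : W} {a : Γ} {m : ℕ}
    (ha : a ∈ (B.repr x).curry.support) (hsingle : ((B.repr x).curry a).support ⊆ {m}) :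
    (B.repr ⁅B (a, m), x⁆).curry.support.card < (B.repr x).curry.support.card := by
  classical
  have h2a : a + a ∉ (B.repr ⁅B (a, m), x⁆).curry.support := by
    rw [Finsupp.mem_support_iff, not_not, ← Finsupp.support_eq_empty,
      hB.support_curry_lie_add_self, Finset.map_eq_empty, Finset.erase_eq_empty_iff]
    exact (Finset.subset_singleton_iff.1 hsingle).imp id id
  have hsub : (B.repr ⁅B (a, m), x⁆).curry.support ⊆
      ((B.repr x).curry.support.map (addLeftEmbedding a)).erase (a + a) := fun γ hγ =>
    Finset.mem_erase.2 ⟨fun h => h2a (h ▸ hγ), hB.curry_support_lie_subset x a m hγ⟩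
  have h2a' : a + a ∈ (B.repr x).curry.support.map (addLeftEmbedding a) :=
    Finset.mem_map_of_mem _ ha
  have hle := Finset.card_le_card hsub
  rw [Finset.card_erase_of_mem h2a', Finset.card_map] at hle
  exact hle.trans_lt (Nat.sub_one_lt (Finset.card_ne_zero_of_mem ha))

theorem exists_basis_mem_of_mem_curry_support [CharZero K] (hB : IsWittTypeBasis B)
    (I : LieIdeal K W) {x : W} (hx : x ∈ I) {a : Γ} (ha : a ∈ (B.repr x).curry.support) :
    ∃ (β : Γ) (j : ℕ), B (β, j) ∈ I := by
  obtain ⟨m, hm⟩ := Finsupp.support_nonempty_iff.2 (Finsupp.mem_support_iff.1 ha)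
  have hy : ⁅B (a, m), x⁆ ∈ I := I.lie_mem hx
  have hsub := hB.curry_support_lie_subset x a m
  have hfib := hB.support_curry_lie_add_self x a m
  by_cases hsingle : ((B.repr x).curry a).support ⊆ {m}
  · by_cases hA : ∃ β ∈ (B.repr x).curry.support, β ≠ a
    · obtain ⟨β, hβ, hβa⟩ := hA
      exact exists_basis_mem_of_mem_curry_support hB I hy (hB.add_mem_curry_support_lie m hβ hβa)
    · push Not at hA
      refine ⟨a, m, B.mem_of_support_repr_subset hx (fun h0 => Finsupp.mem_support_iff.1 hm (by
        rw [Finsupp.curry_apply, h0, map_zero, Finsupp.zero_apply])) fun ⟨β, j⟩ hp => ?_⟩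
      have hj : j ∈ ((B.repr x).curry β).support := by simpa using hp
      obtain rfl : β = a :=
        hA β (Finsupp.mem_support_iff.2 (Finsupp.ne_iff.2 ⟨j, by simpa using hj⟩))
      rw [Finset.mem_singleton.1 (hsingle hj)]
      exact Finset.mem_singleton_self _
  · obtain ⟨j, hj, hjm⟩ := Finset.not_subset.1 hsingle
    have h2a : a + a ∈ (B.repr ⁅B (a, m), x⁆).curry.support := by
      rw [Finsupp.mem_support_iff, ← Finsupp.support_nonempty_iff, hfib]
      exact ⟨_, Finset.mem_map_of_mem _ (Finset.mem_erase.2 ⟨Finset.notMem_singleton.1 hjm, hj⟩)⟩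
    exact exists_basis_mem_of_mem_curry_support hB I hy h2a
termination_by ((B.repr x).curry.support.card, ((B.repr x).curry a).support.card)
decreasing_by
  · exact Prod.Lex.left _ _ (hB.card_curry_support_lie_lt ha hsingle)
  · have hle := Finset.card_le_card hsub
    have hpos := Finset.card_pos.2 ⟨m, hm⟩
    rw [Finset.card_map] at hle
    rw [Prod.lex_def, hfib, Finset.card_map, Finset.card_erase_of_mem hm]
    dsimp only
    omega

end IsWittTypeBasis

theorem stmt6_general (Γ : AddSubgroup ℂ)
    (W : Type) [LieRing W] [LieAlgebra ℂ W] (B : Module.Basis (Γ × ℕ) ℂ W)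
    (hB : ∀ (α β : Γ) (i j : ℕ),
      ⁅B (α, i), B (β, j)⁆ = ((β : ℂ) - (α : ℂ)) • B (α + β, i + j)
        + ((j : ℂ) - (i : ℂ)) • B (α + β, i + j + 1)) :
    ∀ I : LieIdeal ℂ W, I ≠ ⊥ → ∃ (β : Γ) (j : ℕ), B (β, j) ∈ I := by
  intro I hI
  obtain ⟨x, hxI, hx⟩ : ∃ x ∈ I, x ≠ 0 := by
    simpa [LieSubmodule.eq_bot_iff] using hI
  obtain ⟨a, ha⟩ : (B.repr x).curry.support.Nonempty := by
    rw [Finsupp.support_nonempty_iff, ← Finsupp.coe_curryAddEquiv, Ne,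
      AddEquiv.map_eq_zero_iff, LinearEquiv.map_eq_zero_iff]
    exact hx
  exact IsWittTypeBasis.exists_basis_mem_of_mem_curry_support hB I hxI ha

theorem stmt6 (Γ : AddSubgroup ℂ) (hΓ : Γ ≠ ⊥)
    (W : Type) [LieRing W] [LieAlgebra ℂ W] (B : Module.Basis (Γ × ℕ) ℂ W)
    (hB : ∀ (α β : Γ) (i j : ℕ),
      ⁅B (α, i), B (β, j)⁆ = ((β : ℂ) - (α : ℂ)) • B (α + β, i + j)
        + ((j : ℂ) - (i : ℂ)) • B (α + β, i + j + 1)) :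
    ∀ I : LieIdeal ℂ W, I ≠ ⊥ → ∃ (β : Γ) (j : ℕ), B (β, j) ∈ I :=
  stmt6_general Γ W B hB
end

section
/- The Lie algebra W(Γ) is generated (as a Lie algebra) by the set {L_{α,0}, L_{α,1} : α ∈ Γ}; that is, the smallest Lie subalgebra of W(Γ) containing all L_{α,0} and L_{α,1} with α ∈ Γ is W(Γ) itself. -/
/-!
Since `[L_{α-δ,n+1}, L_{δ,1}] + [L_{α-δ,1}, L_{δ,n+1}] = 2(2δ - α) L_{α,n+2}` (the `L_{α,n+3}` terms
cancel), induction on `n` puts every `L_{α,n+1}` in the Lie algebra generated by the `L_{β,1}`,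
provided some `δ ∈ Γ` has `2δ ≠ α`. Such a `δ` exists because `Γ ≠ 0`: if `2γ = α` for some
`γ ≠ 0` then `δ = -γ` works.
-/

lemma AddSubgroup.exists_two_mul_ne {Γ : AddSubgroup ℂ} (hΓ : Γ ≠ ⊥) (a : ℂ) :
    ∃ δ : Γ, 2 * (δ : ℂ) ≠ a := by
  obtain ⟨γ, hγ⟩ := AddSubgroup.ne_bot_iff_exists_ne_zero.mp hΓ
  by_cases hγa : 2 * (γ : ℂ) = a
  · refine ⟨-γ, fun h => hγ (Subtype.ext ?_)⟩
    push_cast at h ⊢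
    linear_combination (hγa - h) / 4
  · exact ⟨γ, hγa⟩

section IsWittFamily

variable {Γ : AddSubgroup ℂ} {W : Type*} [LieRing W] [LieAlgebra ℂ W]

def IsWittFamily (L : Γ × ℕ → W) : Prop :=
  ∀ (α β : Γ) (i j : ℕ), ⁅L (α, i), L (β, j)⁆ = ((β : ℂ) - (α : ℂ)) • L (α + β, i + j)
    + ((j : ℂ) - (i : ℂ)) • L (α + β, i + j + 1)

variable {L : Γ × ℕ → W}

lemma IsWittFamily.lie_add_lie_eq_smul (hL : IsWittFamily L) (α δ : Γ) (n : ℕ) :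
    ⁅L (α - δ, n + 1), L (δ, 1)⁆ + ⁅L (α - δ, 1), L (δ, n + 1)⁆
      = (2 * (2 * (δ : ℂ) - α)) • L (α, n + 2) := by
  rw [hL, hL, sub_add_cancel, add_comm 1 (n + 1)]
  push_cast
  module

lemma IsWittFamily.mem_of_forall_one_mem (hL : IsWittFamily L) (hΓ : Γ ≠ ⊥)
    (K : LieSubalgebra ℂ W) (hK : ∀ α, L (α, 1) ∈ K) (n : ℕ) (α : Γ) : L (α, n + 1) ∈ K := by
  induction n generalizing α with
  | zero => exact hK α
  | succ n ih =>
    obtain ⟨δ, hδ⟩ := AddSubgroup.exists_two_mul_ne hΓ α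
    have hc : (2 * (2 * δ - α) : ℂ) ≠ 0 := mul_ne_zero two_ne_zero (sub_ne_zero.mpr hδ)
    have hsum := K.add_mem (K.lie_mem (ih (α - δ)) (hK δ)) (K.lie_mem (hK (α - δ)) (ih δ))
    rw [hL.lie_add_lie_eq_smul] at hsum
    have := K.smul_mem (2 * (2 * δ - α) : ℂ)⁻¹ hsum
    rwa [smul_smul, inv_mul_cancel₀ hc, one_smul] at this

end IsWittFamily

lemma LieSubalgebra.eq_top_of_basis_mem {R L ι : Type*} [CommRing R] [LieRing L] [LieAlgebra R L]
    (K : LieSubalgebra R L) (b : Module.Basis ι R L) (hb : ∀ i, b i ∈ K) : K = ⊤ := by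
  rw [← LieSubalgebra.toSubmodule_eq_top, eq_top_iff, ← b.span_eq, Submodule.span_le]
  rintro _ ⟨i, rfl⟩
  exact hb i

theorem stmt7 (Γ : AddSubgroup ℂ) (hΓ : Γ ≠ ⊥)
    (W : Type) [LieRing W] [LieAlgebra ℂ W] (B : Module.Basis (Γ × ℕ) ℂ W)
    (hB : ∀ (α β : Γ) (i j : ℕ),
      ⁅B (α, i), B (β, j)⁆ = ((β : ℂ) - (α : ℂ)) • B (α + β, i + j)
        + ((j : ℂ) - (i : ℂ)) • B (α + β, i + j + 1)) :
    LieSubalgebra.lieSpan ℂ W {x : W | ∃ α : Γ, x = B (α, 0) ∨ x = B (α, 1)} = ⊤ := by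
  set K := LieSubalgebra.lieSpan ℂ W {x : W | ∃ α : Γ, x = B (α, 0) ∨ x = B (α, 1)}
  have h0 (α : Γ) : B (α, 0) ∈ K := LieSubalgebra.subset_lieSpan ⟨α, .inl rfl⟩
  have h1 (α : Γ) : B (α, 1) ∈ K := LieSubalgebra.subset_lieSpan ⟨α, .inr rfl⟩
  refine K.eq_top_of_basis_mem B ?_
  rintro ⟨α, _ | n⟩
  · exact h0 α
  · exact IsWittFamily.mem_of_forall_one_mem hB hΓ K h1 n α
end

section
/- For Γ = ℤ, every derivation of W(ℤ) can be written uniquely as ad_y + c·D₀ for some y ∈ W(ℤ) and c ∈ ℂ, where D₀ is the derivation determined by D₀(L_{n,i}) = n·L_{n,i} for n ∈ ℤ, i ∈ ℤ≥0. -/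
/-!
Write `E = L_{0,0}`, `τₘ : L_{s,k} ↦ L_{s+m,k}` and `σ : L_{s,k} ↦ L_{s,k+1}`. Reading off
coordinates, `⁅E, v⁆ = n v + c σ v` forces `v ∈ K L_{n,c}`; together with the commutation rule
`⁅L_{n,j}, τₘ v⁆ = τ_{m+n} (⁅L_{0,j}, v⁆ + (m - n) σʲ v)` this drives the whole argument.

Given a derivation `δ`, the translation `τ₋₁` produces `y` with `δ E = ⁅y, E⁆`. Once `δ E = 0`,
each `δ L_{n,0}` is an `n`-eigenvector of `ad E`, hence `λ(n) L_{n,0}` with `λ` additive, so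
`λ(n) = n λ(1)` and subtracting `λ(1) D₀` kills every `L_{n,0}`. Such a derivation commutes with
all `ad L_{n,0}`, which pins `δ L_{0,1}` down to a multiple of `L_{0,2}`; subtracting a multiple of
`ad E - D₀` then kills `L_{0,1}` as well. Since the `L_{n,0}` and `L_{0,1}` generate `W`, the
remaining derivation is zero. Uniqueness: `ad z = c D₀` gives `⁅E, z⁆ = 0`, so `z ∈ K E`, and
evaluating at `L_{1,1}` gives `z = 0` and `c = 0`.
-/

open Module

theorem eq_zsmul_one_of_map_add_of_ne {G : Type*} [AddCommGroup G] (f : ℤ → G) (h0 : f 0 = 0)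
    (hadd : ∀ m n : ℤ, m ≠ n → f (m + n) = f m + f n) (n : ℤ) : f n = n • f 1 := by
  have hneg (n : ℤ) (hn : n ≠ 0) : f (-n) = -f n := by
    have := hadd n (-n) (by omega)
    rw [add_neg_cancel, h0] at this
    exact eq_neg_of_add_eq_zero_right this.symm
  -- `f 5 = f 2 + f 3`, with `f 5` and `f 3` both expanded by repeatedly splitting off `1`
  have h2 : f 2 = (2 : ℤ) • f 1 := by
    have h5 := hadd 2 3 (by norm_num)
    rw [show (2 + 3 : ℤ) = 1 + (1 + (1 + 2)) by norm_num, hadd 1 _ (by norm_num),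
      hadd 1 _ (by norm_num), show (3 : ℤ) = 1 + 2 by norm_num, hadd 1 2 (by norm_num)] at h5
    rw [← sub_eq_zero, ← neg_eq_zero, ← sub_eq_zero.2 h5]
    abel
  induction n using Int.induction_on with
  | zero => simpa using h0
  | succ k ih =>
    rcases eq_or_ne (k : ℤ) 1 with hk | hk
    · rw [hk]; simpa using h2
    · rw [hadd _ _ hk, ih, add_zsmul, one_zsmul]
  | pred k ih =>
    rcases eq_or_ne (-(k : ℤ)) (-1) with hk | hk
    · rw [show -(k : ℤ) - 1 = -2 by omega, hneg 2 (by norm_num), h2, neg_zsmul]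
    · rw [sub_eq_add_neg, hadd _ _ hk, ih, hneg 1 one_ne_zero, add_zsmul, neg_one_zsmul]

namespace LieDerivation

variable {R L ι : Type*} [CommRing R] [LieRing L] [LieAlgebra R L]

theorem basis_ext (b : Basis ι R L) {D₁ D₂ : LieDerivation R L L}
    (h : ∀ i, D₁ (b i) = D₂ (b i)) : D₁ = D₂ :=
  ext fun a => LinearMap.congr_fun (b.ext (f₁ := (D₁ : L →ₗ[R] L)) (f₂ := D₂) h) a

def ofBasis (b : Basis ι R L) (D : L →ₗ[R] L)
    (h : ∀ i j, D ⁅b i, b j⁆ = ⁅b i, D (b j)⁆ - ⁅b j, D (b i)⁆) : LieDerivation R L L where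
  toLinearMap := D
  leibniz' x y := by
    have key : (LieModule.toEnd R L L : L →ₗ[R] Module.End R L).compr₂ D =
        (LieModule.toEnd R L L : L →ₗ[R] Module.End R L).compl₂ D -
          ((LieModule.toEnd R L L : L →ₗ[R] Module.End R L).compl₂ D).flip :=
      LinearMap.ext_basis b b fun i j => by simpa using h i j
    simpa using LinearMap.congr_fun₂ key x y

@[simp] theorem ofBasis_apply (b : Basis ι R L) (D : L →ₗ[R] L) (h) (x : L) :
    ofBasis b D h x = D x := rfl

end LieDerivation

variable {K W : Type*} [Field K] [LieRing W] [LieAlgebra K W]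

structure IsWBasis_s11 (B : Basis (ℤ × ℕ) K W) : Prop where
  lie_basis (m n : ℤ) (i j : ℕ) : ⁅B (m, i), B (n, j)⁆ =
    ((n : K) - m) • B (m + n, i + j) + ((j : K) - i) • B (m + n, i + j + 1)

noncomputable def Module.Basis.shift (B : Basis (ℤ × ℕ) K W) (m : ℤ) (j : ℕ) : W →ₗ[K] W :=
  B.constr K fun p => B (p.1 + m, p.2 + j)

namespace Module.Basis

variable (B : Basis (ℤ × ℕ) K W)

@[simp] theorem shift_basis (m : ℤ) (j : ℕ) (s : ℤ) (k : ℕ) :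
    B.shift m j (B (s, k)) = B (s + m, k + j) :=
  B.constr_basis K _ _

@[simp] theorem shift_zero_zero (v : W) : B.shift 0 0 v = v := by
  have : B.shift 0 0 = LinearMap.id := B.ext fun ⟨_, _⟩ => by simp
  rw [this, LinearMap.id_apply]

theorem shift_shift (m m' : ℤ) (j j' : ℕ) (v : W) :
    B.shift m j (B.shift m' j' v) = B.shift (m' + m) (j' + j) v := by
  have : B.shift m j ∘ₗ B.shift m' j' = B.shift (m' + m) (j' + j) :=
    B.ext fun ⟨_, _⟩ => by simp [add_assoc]
  exact LinearMap.congr_fun this v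

theorem repr_shift_add (m : ℤ) (j : ℕ) (v : W) (p : ℤ) (q : ℕ) :
    B.repr (B.shift m j v) (p, q + j) = B.repr v (p - m, q) := by
  have : B.coord (p, q + j) ∘ₗ B.shift m j = B.coord (p - m, q) :=
    B.ext fun ⟨s, k⟩ => by simp [Finsupp.single_apply, eq_sub_iff_add_eq]
  simpa using LinearMap.congr_fun this v

theorem repr_shift_of_lt (m : ℤ) {j : ℕ} (v : W) (p : ℤ) {q : ℕ} (hq : q < j) :
    B.repr (B.shift m j v) (p, q) = 0 := by
  have : B.coord (p, q) ∘ₗ B.shift m j = 0 :=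
    B.ext fun ⟨s, k⟩ => by simp [show k + j ≠ q by omega]
  simpa using LinearMap.congr_fun this v

end Module.Basis

namespace IsWBasis_s11

variable {B : Basis (ℤ × ℕ) K W} (hB : IsWBasis_s11 B)
include hB

theorem lie_basis_zero_zero (n : ℤ) (j : ℕ) :
    ⁅B (0, 0), B (n, j)⁆ = (n : K) • B (n, j) + (j : K) • B (n, j + 1) := by
  simp [hB.lie_basis]

theorem repr_lie_basis_zero_zero_apply_zero (v : W) (p : ℤ) :
    B.repr ⁅B (0, 0), v⁆ (p, 0) = p * B.repr v (p, 0) := by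
  have : B.coord (p, 0) ∘ₗ LieAlgebra.ad K W (B (0, 0)) = (p : K) • B.coord (p, 0) := by
    refine B.ext fun ⟨s, k⟩ => ?_
    rcases eq_or_ne s p with rfl | hs <;> simp [hB.lie_basis, Finsupp.single_apply, *]
  simpa using LinearMap.congr_fun this v

theorem repr_lie_basis_zero_zero_apply_succ (v : W) (p : ℤ) (q : ℕ) :
    B.repr ⁅B (0, 0), v⁆ (p, q + 1) = p * B.repr v (p, q + 1) + q * B.repr v (p, q) := by
  have : B.coord (p, q + 1) ∘ₗ LieAlgebra.ad K W (B (0, 0)) =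
      (p : K) • B.coord (p, q + 1) + (q : K) • B.coord (p, q) := by
    refine B.ext fun ⟨s, k⟩ => ?_
    rcases eq_or_ne s p with rfl | hs <;> rcases eq_or_ne k q with rfl | hk <;>
      simp [hB.lie_basis, Finsupp.single_apply, *]
  simpa using LinearMap.congr_fun this v

theorem lie_basis_shift (n m : ℤ) (j : ℕ) (v : W) :
    ⁅B (n, j), B.shift m 0 v⁆ =
      B.shift (m + n) 0 (⁅B (0, j), v⁆ + ((m : K) - n) • B.shift 0 j v) := by
  have : LieAlgebra.ad K W (B (n, j)) ∘ₗ B.shift m 0 =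
      B.shift (m + n) 0 ∘ₗ (LieAlgebra.ad K W (B (0, j)) + ((m : K) - n) • B.shift 0 j) := by
    refine B.ext fun ⟨s, k⟩ => ?_
    simp only [LinearMap.comp_apply, LinearMap.add_apply, LinearMap.smul_apply,
      LieAlgebra.ad_apply, B.shift_basis, hB.lie_basis, map_add, map_smul, zero_add, add_zero]
    push_cast
    rw [show n + (s + m) = s + (m + n) by ring, Nat.add_comm k j]
    module
  exact LinearMap.congr_fun this v

theorem exists_apply_basis_zero_zero_eq_lie (δ : LieDerivation K W W) :
    ∃ y : W, δ (B (0, 0)) = ⁅y, B (0, 0)⁆ := by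
  set a := δ (B (0, 0))
  set X := δ (B (1, 0))
  have hX : ⁅B (0, 0), X⁆ - X = ⁅B (1, 0), a⁆ := by
    have h := δ.apply_lie_eq_sub (B (0, 0)) (B (1, 0))
    rw [hB.lie_basis_zero_zero, Nat.cast_zero, zero_smul, add_zero, Int.cast_one, one_smul,
      eq_sub_iff_add_eq] at h
    rw [← h, add_sub_cancel_left]
  have h1 : ⁅B (1, 0), a⁆ = B.shift 1 0 (⁅B (0, 0), a⁆ - a) := by
    simpa [sub_eq_add_neg] using hB.lie_basis_shift 1 0 0 a
  have h2 : ⁅B (0, 0), B.shift (-1) 0 X⁆ = B.shift (-1) 0 (⁅B (0, 0), X⁆ - X) := by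
    simpa [sub_eq_add_neg] using hB.lie_basis_shift 0 (-1) 0 X
  refine ⟨B.shift (-1) 0 X - a, ?_⟩
  rw [← lie_skew, lie_sub, h2, hX, h1, B.shift_shift]
  simp

theorem apply_basis_two (δ : LieDerivation K W W) (h : ∀ n : ℤ, δ (B (n, 0)) = 0) (n : ℤ) :
    δ (B (n, 2)) = ⁅B (0, 0), δ (B (n, 1))⁆ - (n : K) • δ (B (n, 1)) := by
  have := δ.apply_lie_eq_sub (B (0, 0)) (B (n, 1))
  rw [hB.lie_basis_zero_zero, h, lie_zero, sub_zero] at this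
  simp only [map_add, map_smul, Nat.cast_one, one_smul] at this
  rw [← this, add_sub_cancel_left]

noncomputable def gradingDerivation : LieDerivation K W W :=
  LieDerivation.ofBasis B (B.constr K fun p => (p.1 : K) • B p) fun ⟨m, i⟩ ⟨n, j⟩ => by
    simp only [map_add, map_smul, B.constr_basis, lie_smul, hB.lie_basis]
    rw [add_comm n m, add_comm j i]
    push_cast
    module

@[simp] theorem gradingDerivation_apply_basis (n : ℤ) (i : ℕ) :
    hB.gradingDerivation (B (n, i)) = (n : K) • B (n, i) := by
  simp [gradingDerivation]

variable [CharZero K]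

theorem eq_smul_basis_of_lie_eq {v : W} {n : ℤ} {c : ℕ}
    (h : ⁅B (0, 0), v⁆ = (n : K) • v + (c : K) • B.shift 0 1 v) :
    v = B.repr v (n, c) • B (n, c) := by
  have h0 (p : ℤ) : ((p : K) - n) * B.repr v (p, 0) = 0 := by
    have := congrArg (B.repr · (p, 0)) h
    simp only [hB.repr_lie_basis_zero_zero_apply_zero, map_add, map_smul, Finsupp.add_apply,
      Finsupp.smul_apply, B.repr_shift_of_lt 0 v p zero_lt_one, smul_eq_mul] at this
    linear_combination this
  have hsucc (p : ℤ) (q : ℕ) :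
      ((p : K) - n) * B.repr v (p, q + 1) = ((c : K) - q) * B.repr v (p, q) := by
    have := congrArg (B.repr · (p, q + 1)) h
    simp only [hB.repr_lie_basis_zero_zero_apply_succ, map_add, map_smul, Finsupp.add_apply,
      Finsupp.smul_apply, B.repr_shift_add, sub_zero, smul_eq_mul] at this
    linear_combination this
  have hoff (p : ℤ) (hp : p ≠ n) (q : ℕ) : B.repr v (p, q) = 0 := by
    have hpn : (p : K) - n ≠ 0 := sub_ne_zero.2 (by exact_mod_cast hp)
    induction q with
    | zero => exact (mul_eq_zero.1 (h0 p)).resolve_left hpn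
    | succ q ih => simpa [ih, hpn] using hsucc p q
  have hon (q : ℕ) (hq : q ≠ c) : B.repr v (n, q) = 0 := by
    have hcq : (c : K) - q ≠ 0 := sub_ne_zero.2 (by exact_mod_cast hq.symm)
    simpa [hcq] using (hsucc n q).symm
  refine B.ext_elem fun ⟨p, q⟩ => ?_
  rw [map_smul, B.repr_self, Finsupp.smul_apply, Finsupp.single_apply]
  by_cases hp : p = n
  · subst hp
    by_cases hq : q = c
    · simp [hq]
    · simp [hon q hq, Ne.symm hq]
  · simp [hoff p hp q, Ne.symm hp]

theorem exists_apply_basis_eq_smul (δ : LieDerivation K W W) (hE : δ (B (0, 0)) = 0) :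
    ∃ c : K, ∀ n : ℤ, δ (B (n, 0)) = (c * n) • B (n, 0) := by
  set f : ℤ → K := fun n => B.repr (δ (B (n, 0))) (n, 0)
  have hf (n : ℤ) : δ (B (n, 0)) = f n • B (n, 0) := by
    refine hB.eq_smul_basis_of_lie_eq (c := 0) ?_
    have := δ.apply_lie_eq_sub (B (0, 0)) (B (n, 0))
    rw [hB.lie_basis_zero_zero, hE, lie_zero, sub_zero] at this
    simpa using this.symm
  have hadd (m n : ℤ) (hmn : m ≠ n) : f (m + n) = f m + f n := by
    have := δ.apply_lie_eq_sub (B (m, 0)) (B (n, 0))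
    rw [hf, hf, lie_smul, lie_smul] at this
    simp only [hB.lie_basis, map_add, map_smul, hf, add_zero, add_comm n m] at this
    have key : (((n : K) - m) * f (m + n)) • B (m + n, 0) =
        (((n : K) - m) * (f m + f n)) • B (m + n, 0) := by
      linear_combination (norm := module) this
    have hnm : (n : K) - m ≠ 0 := sub_ne_zero.2 (by exact_mod_cast hmn.symm)
    exact mul_left_cancel₀ hnm (smul_left_injective K (B.ne_zero _) key)
  refine ⟨f 1, fun n => ?_⟩
  rw [hf, eq_zsmul_one_of_map_add_of_ne f (by simp [f, hE]) hadd n, zsmul_eq_mul, mul_comm]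

section

variable (δ : LieDerivation K W W) (h : ∀ n : ℤ, δ (B (n, 0)) = 0)
include h

theorem exists_apply_basis_one_eq (n : ℤ) :
    ∃ α : K, δ (B (n, 1)) = B.shift n 0 (δ (B (0, 1))) + α • B (2 * n, 0) := by
  have hF : ⁅B (n, 0), δ (B (0, 1))⁆ =
      ⁅B (0, 0), δ (B (n, 1))⁆ - (2 * n : K) • δ (B (n, 1)) := by
    have := δ.apply_lie_eq_sub (B (n, 0)) (B (0, 1))
    rw [hB.lie_basis, h, lie_zero, sub_zero] at this
    simp only [map_add, map_neg, map_smul, add_zero, zero_add, Nat.cast_zero, Nat.cast_one,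
      zero_sub, sub_zero, Int.cast_zero, neg_smul, one_smul, hB.apply_basis_two δ h] at this
    rw [← this]
    module
  have h1 := hB.lie_basis_shift n 0 0 (δ (B (0, 1)))
  have h2 := hB.lie_basis_shift 0 n 0 (δ (B (0, 1)))
  simp only [B.shift_zero_zero, zero_add, add_zero, Int.cast_zero, sub_zero, zero_sub,
    neg_smul, map_add, map_neg, map_smul] at h1 h2
  have : ⁅B (0, 0), δ (B (n, 1)) - B.shift n 0 (δ (B (0, 1)))⁆ =
      ((2 * n : ℤ) : K) • (δ (B (n, 1)) - B.shift n 0 (δ (B (0, 1)))) +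
        ((0 : ℕ) : K) • B.shift 0 1 (δ (B (n, 1)) - B.shift n 0 (δ (B (0, 1)))) := by
    rw [lie_sub, h2]
    push_cast
    linear_combination (norm := module) h1 - hF
  exact ⟨_, sub_eq_iff_eq_add'.1 (hB.eq_smul_basis_of_lie_eq this)⟩

theorem exists_smul_lie_sub_shift_eq (n : ℤ) :
    ∃ α : K, (n : K) • (⁅B (0, 0), δ (B (0, 1))⁆ - (2 : K) • B.shift 0 1 (δ (B (0, 1)))) =
      α • ((2 * n : K) • B (n, 1) - B (n, 2) - (n : K) ^ 2 • B (n, 0)) := by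
  obtain ⟨α, hG⟩ := hB.exists_apply_basis_one_eq δ h n
  refine ⟨α, ?_⟩
  have hC := δ.apply_lie_eq_sub (B (0, 1)) (B (n, 1))
  rw [hB.lie_basis] at hC
  simp only [zero_add, Nat.reduceAdd, Int.cast_zero, sub_zero, sub_self, zero_smul, add_zero,
    map_smul] at hC
  rw [hB.apply_basis_two δ h, hG] at hC
  have m1 := hB.lie_basis_shift 0 n 1 (δ (B (0, 1)))
  have m2 := hB.lie_basis_shift n 0 1 (δ (B (0, 1)))
  have m3 := hB.lie_basis_shift 0 n 0 (δ (B (0, 1)))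
  simp only [B.shift_zero_zero, zero_add, add_zero, Int.cast_zero, sub_zero, zero_sub,
    neg_smul, map_add, map_neg, map_smul] at m1 m2 m3
  simp only [zero_add, add_zero, Int.cast_zero, sub_zero, sub_self, zero_smul, Nat.cast_one,
    lie_add, lie_smul, m1, m2, m3, hB.lie_basis] at hC
  have := congrArg (B.shift (-n) 0) hC
  simp only [map_add, map_sub, map_smul, map_neg, B.shift_shift, B.shift_basis, add_neg_cancel,
    zero_add, add_zero, B.shift_zero_zero, show 2 * n + -n = n by ring] at this
  push_cast at this
  linear_combination (norm := module) this

theorem exists_apply_basis_zero_one_eq_smul : ∃ g : K, δ (B (0, 1)) = g • B (0, 2) := by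
  obtain ⟨α₁, h₁⟩ := hB.exists_smul_lie_sub_shift_eq δ h 1
  obtain ⟨α₂, h₂⟩ := hB.exists_smul_lie_sub_shift_eq δ h 2
  push_cast at h₁ h₂
  have hα : α₁ = 0 := by
    have : (2 : K) • α₁ • ((2 * 1 : K) • B (1, 1) - B (1, 2) - (1 : K) ^ 2 • B (1, 0)) =
        α₂ • ((2 * 2 : K) • B (2, 1) - B (2, 2) - (2 : K) ^ 2 • B (2, 0)) := by
      linear_combination (norm := module) h₂ - (2 : K) • h₁
    simpa [Finsupp.single_apply] using congrArg (B.repr · (1, 0)) this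
  rw [hα, zero_smul, one_smul, sub_eq_zero] at h₁
  exact ⟨_, hB.eq_smul_basis_of_lie_eq (n := 0) (c := 2) (by simpa using h₁)⟩

end

theorem smul_apply_basis_eq_smul_apply_basis_succ (δ : LieDerivation K W W)
    (h0 : ∀ n : ℤ, δ (B (n, 0)) = 0) (h1 : δ (B (0, 1)) = 0) (n : ℤ) (k : ℕ) :
    (n : K) • δ (B (n, k)) = (k : K) • δ (B (n, k + 1)) := by
  have h0k (k : ℕ) : δ (B (0, k)) = 0 := by
    induction k with
    | zero => exact h0 0
    | succ k ih =>
      rcases Nat.eq_zero_or_pos k with rfl | hk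
      · exact h1
      · have := δ.apply_lie_eq_sub (B (0, 0)) (B (0, k))
        rw [hB.lie_basis_zero_zero, h0, ih, lie_zero, lie_zero, sub_zero] at this
        simpa [hk.ne'] using this
  have := δ.apply_lie_eq_sub (B (0, k)) (B (n, 0))
  rw [hB.lie_basis, h0, h0k, lie_zero, lie_zero, sub_zero] at this
  simp only [map_add, map_smul, map_neg, zero_add, add_zero, Int.cast_zero, sub_zero,
    Nat.cast_zero, zero_sub, neg_smul] at this
  rwa [← sub_eq_add_neg, sub_eq_zero] at this

theorem derivation_eq_zero (δ : LieDerivation K W W) (h0 : ∀ n : ℤ, δ (B (n, 0)) = 0)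
    (h1 : δ (B (0, 1)) = 0) : δ = 0 := by
  have hrel := hB.smul_apply_basis_eq_smul_apply_basis_succ δ h0 h1
  have hone (n : ℤ) : δ (B (n, 1)) = 0 := by
    rcases eq_or_ne n 0 with rfl | hn
    · exact h1
    have hw : ⁅⁅B (0, 1), B (2 * n, 0)⁆, B (-n, 0)⁆ =
        (-6 * (n : K) ^ 2) • B (n, 1) + (n : K) • B (n, 2) + (2 : K) • B (n, 3) := by
      simp only [hB.lie_basis, add_lie, smul_lie, show 0 + 2 * n + -n = n by ring]
      push_cast
      module
    have hδ : δ ⁅⁅B (0, 1), B (2 * n, 0)⁆, B (-n, 0)⁆ = 0 := by simp [h0, h1]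
    rw [hw] at hδ
    simp only [map_add, map_smul] at hδ
    have h2 := hrel n 1
    have h3 := hrel n 2
    simp only [Nat.cast_one, Nat.reduceAdd, one_smul, Nat.cast_ofNat] at h2 h3
    have : (-4 * (n : K) ^ 2) • δ (B (n, 1)) = 0 := by
      linear_combination (norm := module) hδ + h3 + (2 * (n : K)) • h2
    exact (smul_eq_zero.1 this).resolve_left
      (mul_ne_zero (by norm_num) (pow_ne_zero _ (Int.cast_ne_zero.2 hn)))
  refine LieDerivation.basis_ext B fun ⟨n, i⟩ => ?_
  rw [LieDerivation.zero_apply]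
  induction i with
  | zero => exact h0 n
  | succ k ih =>
    rcases Nat.eq_zero_or_pos k with rfl | hk
    · exact hone n
    · have := hrel n k
      rw [ih, smul_zero] at this
      exact (smul_eq_zero.1 this.symm).resolve_left (by exact_mod_cast hk.ne')

open LieDerivation in
theorem exists_eq_ad_add_smul_gradingDerivation (δ : LieDerivation K W W) :
    ∃ (y : W) (c : K), δ = ad K W y + c • hB.gradingDerivation := by
  obtain ⟨y, hy⟩ := hB.exists_apply_basis_zero_zero_eq_lie δ
  obtain ⟨c, hc⟩ := hB.exists_apply_basis_eq_smul (δ - ad K W y) (by simp [hy])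
  have h₂ (n : ℤ) : (δ - ad K W y - c • hB.gradingDerivation) (B (n, 0)) = 0 := by
    have := hc n
    simp only [LieDerivation.sub_apply, LieDerivation.smul_apply, ad_apply_apply,
      gradingDerivation_apply_basis] at this ⊢
    rw [this, smul_smul, sub_self]
  obtain ⟨g, hg⟩ := hB.exists_apply_basis_zero_one_eq_smul _ h₂
  have h₃ := hB.derivation_eq_zero
    (δ - ad K W y - c • hB.gradingDerivation - g • (ad K W (B (0, 0)) - hB.gradingDerivation))
    (fun n => by rw [LieDerivation.sub_apply, h₂]; simp [hB.lie_basis_zero_zero])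
    (by rw [LieDerivation.sub_apply, hg]; simp [hB.lie_basis_zero_zero])
  refine ⟨y + g • B (0, 0), c - g, ?_⟩
  rw [map_add, map_smul]
  linear_combination (norm := module) h₃

open LieDerivation in
theorem ad_add_smul_gradingDerivation_injective :
    Function.Injective fun p : W × K => ad K W p.1 + p.2 • hB.gradingDerivation := by
  rintro ⟨y, c⟩ ⟨y', c'⟩ hyc
  have hz (n : ℤ) (i : ℕ) : ⁅y - y', B (n, i)⁆ = ((c' - c) * n) • B (n, i) := by
    have := LieDerivation.congr_fun hyc (B (n, i))
    simp only [coe_add, coe_smul, Pi.add_apply, ad_apply_apply, Pi.smul_apply,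
      gradingDerivation_apply_basis] at this
    rw [sub_lie]
    linear_combination (norm := module) this
  have hz0 : y - y' = B.repr (y - y') (0, 0) • B (0, 0) :=
    hB.eq_smul_basis_of_lie_eq (by rw [← lie_skew, hz 0 0]; simp)
  have h11 := hz 1 1
  rw [hz0, smul_lie, hB.lie_basis_zero_zero] at h11
  have hz00 : B.repr (y - y') (0, 0) = 0 := by
    simpa [Finsupp.single_apply] using congrArg (B.repr · (1, 2)) h11
  rw [hz00, zero_smul, eq_comm, smul_eq_zero] at h11
  rw [hz00, zero_smul, sub_eq_zero] at hz0
  exact Prod.ext hz0 (by simpa [sub_eq_zero, B.ne_zero, eq_comm] using h11)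

end IsWBasis_s11

theorem stmt11 (W : Type) [LieRing W] [LieAlgebra ℂ W] (B : Module.Basis (ℤ × ℕ) ℂ W)
    (hB : ∀ (m n : ℤ) (i j : ℕ),
      ⁅B (m, i), B (n, j)⁆ = ((n : ℂ) - (m : ℂ)) • B (m + n, i + j)
        + ((j : ℂ) - (i : ℂ)) • B (m + n, i + j + 1))
    (D : W →ₗ[ℂ] W)
    (hD : ∀ x y : W, D ⁅x, y⁆ = ⁅D x, y⁆ + ⁅x, D y⁆) :
    -- there is a unique pair `(y, c)` with `D = ad_y + c • D₀`,
    -- where `D₀ (L_{n,i}) = n • L_{n,i}`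
    ∃! p : W × ℂ, ∀ (n : ℤ) (i : ℕ),
      D (B (n, i)) = ⁅p.1, B (n, i)⁆ + (p.2 * (n : ℂ)) • B (n, i) := by
  have hW : IsWBasis_s11 B := ⟨hB⟩
  let δ : LieDerivation ℂ W W :=
    { toLinearMap := D, leibniz' := fun x y => by rw [hD, ← lie_skew (D x)]; abel }
  have hδD (x : W) : δ x = D x := rfl
  have hδ (y : W) (c : ℂ) : δ = LieDerivation.ad ℂ W y + c • hW.gradingDerivation ↔
      ∀ (n : ℤ) (i : ℕ), D (B (n, i)) = ⁅y, B (n, i)⁆ + (c * n) • B (n, i) := by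
    refine ⟨fun h n i => ?_, fun h => LieDerivation.basis_ext B fun ⟨n, i⟩ => ?_⟩
    · simpa [hδD, smul_smul] using LieDerivation.congr_fun h (B (n, i))
    · simpa [hδD, smul_smul] using h n i
  obtain ⟨y, c, h⟩ := hW.exists_eq_ad_add_smul_gradingDerivation δ
  exact ⟨(y, c), (hδ y c).1 h,
    fun p hp => hW.ad_add_smul_gradingDerivation_injective (((hδ p.1 p.2).2 hp).symm.trans h)⟩
end

section
/- For every group homomorphism τ : Γ → ℂ* (into the multiplicative group of nonzero complex numbers) and every c ∈ ℂ* with cΓ = Γ, the linear map φ_{τ,c} : W(Γ) → W(Γ) determined by φ_{τ,c}(L_{α,i}) = τ(α) c^{−i−1} L_{cα,i} for all α ∈ Γ, i ∈ ℤ≥0 is a Lie algebra automorphism of W(Γ). -/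
/-!
The map permutes the basis `L_{α,i}` (via `α ↦ cα`, a bijection of `Γ` because `cΓ = Γ`) up to the
nonzero weights `w(α,i) = τ(α) c^{-i-1}`, so it is a linear automorphism. Since the bracket is
bilinear it suffices to check it on basis vectors, where it comes down to
`w(α+β,i+j) = c·w(α,i)·w(β,j)` (absorbing the factor `c` of `cβ - cα`) and
`w(α+β,i+j+1) = w(α,i)·w(β,j)`.
-/

/-- For `c ∈ ℂ*` with `cΓ = Γ`, the element `cα ∈ Γ` for `α ∈ Γ`. -/
def scaleMem (Γ : AddSubgroup ℂ) (c : ℂ)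
    (hc : ∀ z : ℂ, z ∈ Γ ↔ c * z ∈ Γ) (α : Γ) : Γ :=
  ⟨c * (α : ℂ), (hc (α : ℂ)).mp α.2⟩

open Module

theorem LinearMap.map_lie_of_basis {R L L' ι : Type*} [CommRing R] [LieRing L] [LieAlgebra R L]
    [LieRing L'] [LieAlgebra R L'] (b : Basis ι R L) (f : L →ₗ[R] L')
    (h : ∀ i j, f ⁅b i, b j⁆ = ⁅f (b i), f (b j)⁆) (x y : L) :
    f ⁅x, y⁆ = ⁅f x, f y⁆ := by
  have : (LieModule.toEnd R L L : L →ₗ[R] Module.End R L).compr₂ f =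
      (LieModule.toEnd R L' L' : L' →ₗ[R] Module.End R L').compl₁₂ f f :=
    LinearMap.ext_basis b b fun i j => by simpa using h i j
  simpa using LinearMap.congr_fun₂ this x y

@[simp]
theorem coe_scaleMem {Γ : AddSubgroup ℂ} {c : ℂ} (hc : ∀ z : ℂ, z ∈ Γ ↔ c * z ∈ Γ) (α : Γ) :
    (scaleMem Γ c hc α : ℂ) = c * α :=
  rfl

noncomputable def scaleAddEquiv (Γ : AddSubgroup ℂ) (c : ℂ) (hc0 : c ≠ 0)
    (hc : ∀ z : ℂ, z ∈ Γ ↔ c * z ∈ Γ) : Γ ≃+ Γ where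
  toFun := scaleMem Γ c hc
  invFun α := ⟨c⁻¹ * α, (hc _).mpr (by rw [mul_inv_cancel_left₀ hc0]; exact α.2)⟩
  left_inv α := Subtype.ext (inv_mul_cancel_left₀ hc0 _)
  right_inv α := Subtype.ext (mul_inv_cancel_left₀ hc0 _)
  map_add' α β := Subtype.ext (mul_add c α β)

section ScalingWeight

variable {Γ : AddSubgroup ℂ} (τ : Γ → ℂˣ) (u : ℂˣ)

def scalingWeight (p : Γ × ℕ) : ℂˣ := τ p.1 * (u ^ (p.2 + 1))⁻¹

variable {τ}

theorem scalingWeight_add (hτ : ∀ α β : Γ, τ (α + β) = τ α * τ β) (α β : Γ) (i j : ℕ) :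
    scalingWeight τ u (α + β, i + j) =
      scalingWeight τ u (α, i) * scalingWeight τ u (β, j) * u := by
  ext
  simp only [scalingWeight, hτ, pow_succ, pow_add, Units.val_mul, Units.val_inv_eq_inv_val,
    Units.val_pow_eq_pow_val]
  field_simp

theorem scalingWeight_add_succ (hτ : ∀ α β : Γ, τ (α + β) = τ α * τ β) (α β : Γ) (i j : ℕ) :
    scalingWeight τ u (α + β, i + j + 1) = scalingWeight τ u (α, i) * scalingWeight τ u (β, j) := by
  ext
  simp only [scalingWeight, hτ, pow_succ, pow_add, Units.val_mul, Units.val_inv_eq_inv_val,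
    Units.val_pow_eq_pow_val]
  field_simp

end ScalingWeight

theorem map_lie_basis_of_eq_scalingWeight_smul {Γ : AddSubgroup ℂ}
    {W : Type*} [LieRing W] [LieAlgebra ℂ W] {B : Module.Basis (Γ × ℕ) ℂ W}
    (hB : ∀ (α β : Γ) (i j : ℕ),
      ⁅B (α, i), B (β, j)⁆ = ((β : ℂ) - (α : ℂ)) • B (α + β, i + j)
        + ((j : ℂ) - (i : ℂ)) • B (α + β, i + j + 1))
    {τ : Γ → ℂˣ} (hτ : ∀ α β : Γ, τ (α + β) = τ α * τ β)
    {c : ℂ} (hc0 : c ≠ 0) (hc : ∀ z : ℂ, z ∈ Γ ↔ c * z ∈ Γ) {f : W →ₗ[ℂ] W}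
    (hf : ∀ p, f (B p) = (scalingWeight τ (.mk0 c hc0) p : ℂ) • B (scaleMem Γ c hc p.1, p.2))
    (p q : Γ × ℕ) :
    f ⁅B p, B q⁆ = ⁅f (B p), f (B q)⁆ := by
  obtain ⟨α, i⟩ := p
  obtain ⟨β, j⟩ := q
  have hscale : scaleMem Γ c hc (α + β) = scaleMem Γ c hc α + scaleMem Γ c hc β :=
    map_add (scaleAddEquiv Γ c hc0 hc) α β
  simp only [hB, map_add, map_smul, hf, lie_smul, smul_lie, smul_add, smul_smul, hscale,
    scalingWeight_add_succ _ hτ, scalingWeight_add _ hτ, Units.val_mul, Units.val_mk0, coe_scaleMem]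
  congr 2 <;> ring

theorem stmt12_general (Γ : AddSubgroup ℂ)
    (W : Type) [LieRing W] [LieAlgebra ℂ W] (B : Module.Basis (Γ × ℕ) ℂ W)
    (hB : ∀ (α β : Γ) (i j : ℕ),
      ⁅B (α, i), B (β, j)⁆ = ((β : ℂ) - (α : ℂ)) • B (α + β, i + j)
        + ((j : ℂ) - (i : ℂ)) • B (α + β, i + j + 1))
    -- `τ : Γ → ℂ*` a group homomorphism
    (τ : Γ → ℂˣ) (hτ : ∀ α β : Γ, τ (α + β) = τ α * τ β)
    -- `c ∈ ℂ*` with `cΓ = Γ`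
    (c : ℂ) (hc0 : c ≠ 0) (hc : ∀ z : ℂ, z ∈ Γ ↔ c * z ∈ Γ) :
    -- the map `L_{α,i} ↦ τ(α) c^{-i-1} L_{cα,i}` is a Lie algebra automorphism
    ∃ e : W ≃ₗ⁅ℂ⁆ W, ∀ (α : Γ) (i : ℕ),
      e (B (α, i)) = ((τ α : ℂ) * (c ^ (i + 1))⁻¹) • B (scaleMem Γ c hc α, i) := by
  let w := scalingWeight τ (.mk0 c hc0)
  let σ : Γ × ℕ ≃ Γ × ℕ := (scaleAddEquiv Γ c hc0 hc).toEquiv.prodCongr (Equiv.refl ℕ)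
  let e : W ≃ₗ[ℂ] W := B.equiv (B.unitsSMul (w ∘ σ.symm)) σ
  have he : ∀ p, e (B p) = (w p : ℂ) • B (scaleMem Γ c hc p.1, p.2) := fun p => by
    rw [Basis.equiv_apply, Basis.unitsSMul_apply, Function.comp_apply, Equiv.symm_apply_apply]
    rfl
  have hlie := LinearMap.map_lie_of_basis B e.toLinearMap
    (map_lie_basis_of_eq_scalingWeight_smul hB hτ hc0 hc he)
  refine ⟨{ e with map_lie' := hlie _ _ }, fun α i => (he (α, i)).trans ?_⟩
  simp [w, scalingWeight]

theorem stmt12 (Γ : AddSubgroup ℂ) (hΓ : Γ ≠ ⊥)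
    (W : Type) [LieRing W] [LieAlgebra ℂ W] (B : Module.Basis (Γ × ℕ) ℂ W)
    (hB : ∀ (α β : Γ) (i j : ℕ),
      ⁅B (α, i), B (β, j)⁆ = ((β : ℂ) - (α : ℂ)) • B (α + β, i + j)
        + ((j : ℂ) - (i : ℂ)) • B (α + β, i + j + 1))
    -- `τ : Γ → ℂ*` a group homomorphism
    (τ : Γ → ℂˣ) (hτ : ∀ α β : Γ, τ (α + β) = τ α * τ β)
    -- `c ∈ ℂ*` with `cΓ = Γ`
    (c : ℂ) (hc0 : c ≠ 0) (hc : ∀ z : ℂ, z ∈ Γ ↔ c * z ∈ Γ) :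
    -- the map `L_{α,i} ↦ τ(α) c^{-i-1} L_{cα,i}` is a Lie algebra automorphism
    ∃ e : W ≃ₗ⁅ℂ⁆ W, ∀ (α : Γ) (i : ℕ),
      e (B (α, i)) = ((τ α : ℂ) * (c ^ (i + 1))⁻¹) • B (scaleMem Γ c hc α, i) :=
  stmt12_general Γ W B hB τ hτ c hc0 hc
end
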